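/- arXiv:2509.02370 — 10 statements merged into one kernel-verified Lean document; each statement's English description precedes it below -/
import Mathlib

section
/- For every binary vector x ∈ {0,1}^n the penalty dual attains strong duality: (i) there exists ρ*(x) ≥ 0 such that for every ρ ≥ ρ*(x) one has L_p(x,ρ) = φ(x), and (ii) φ(x) = inf_{ρ ≥ 0} L_p(x,ρ). -/
open Finset

noncomputable section

/-- A vector is binary if each coordinate is 0 or 1. -/
def IsBin {n : ℕ} (x : Fin n → ℝ) : Prop := ∀ i, x i = 0 ∨ x i = 1

/-- Multilinear extension of `φ` from `{0,1}^n` to `ℝ^n`. -/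
def psi {n : ℕ} (φ : (Fin n → ℝ) → ℝ) (z : Fin n → ℝ) : ℝ :=
  ∑ v : Fin n → Bool,
    φ (fun i => if v i then (1 : ℝ) else 0) * ∏ i, (if v i then z i else 1 - z i)

/-- Penalty term `p(x,z) = Σ x_i + Σ z_i - 2 Σ x_i z_i`. -/
def pen {n : ℕ} (x z : Fin n → ℝ) : ℝ :=
  (∑ i, x i) + (∑ i, z i) - 2 * ∑ i, x i * z i

/-- Penalty Lagrangian `L_p(x,ρ) = sup_{z ∈ [0,1]^n} [ψ(z) - ρ·p(x,z)]`. -/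
def Lp {n : ℕ} (φ : (Fin n → ℝ) → ℝ) (x : Fin n → ℝ) (ρ : ℝ) : ℝ :=
  sSup ((fun z => psi φ z - ρ * pen x z) '' Set.Icc (0 : Fin n → ℝ) 1)

/- ### Auxiliary lemmas -/

lemma aux_prod_lip {α : Type*} [DecidableEq α] (s : Finset α) (a c : α → ℝ)
    (ha : ∀ i ∈ s, 0 ≤ a i ∧ a i ≤ 1) (hc : ∀ i ∈ s, 0 ≤ c i ∧ c i ≤ 1) :
    |∏ i ∈ s, a i - ∏ i ∈ s, c i| ≤ ∑ i ∈ s, |a i - c i| := by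
  induction s using Finset.induction_on with
  | empty => simp
  | insert j s hj ih =>
    have haj := ha j (Finset.mem_insert_self j s)
    have hcj := hc j (Finset.mem_insert_self j s)
    have ha' : ∀ i ∈ s, 0 ≤ a i ∧ a i ≤ 1 :=
      fun i hi => ha i (Finset.mem_insert_of_mem hi)
    have hc' : ∀ i ∈ s, 0 ≤ c i ∧ c i ≤ 1 :=
      fun i hi => hc i (Finset.mem_insert_of_mem hi)
    have hPc0 : 0 ≤ ∏ i ∈ s, c i := Finset.prod_nonneg fun i hi => (hc' i hi).1
    have hPc1 : ∏ i ∈ s, c i ≤ 1 :=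
      Finset.prod_le_one (fun i hi => (hc' i hi).1) (fun i hi => (hc' i hi).2)
    rw [Finset.prod_insert hj, Finset.prod_insert hj, Finset.sum_insert hj]
    have key : a j * ∏ i ∈ s, a i - c j * ∏ i ∈ s, c i
        = a j * (∏ i ∈ s, a i - ∏ i ∈ s, c i) + (a j - c j) * ∏ i ∈ s, c i := by
      ring
    rw [key]
    calc |a j * (∏ i ∈ s, a i - ∏ i ∈ s, c i) + (a j - c j) * ∏ i ∈ s, c i|
        ≤ |a j * (∏ i ∈ s, a i - ∏ i ∈ s, c i)| + |(a j - c j) * ∏ i ∈ s, c i| :=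
          abs_add_le _ _
      _ = |a j| * |∏ i ∈ s, a i - ∏ i ∈ s, c i| + |a j - c j| * |∏ i ∈ s, c i| := by
          rw [abs_mul, abs_mul]
      _ ≤ 1 * (∑ i ∈ s, |a i - c i|) + |a j - c j| * 1 := by
          have h1 : |a j| ≤ 1 := abs_le.2 ⟨by linarith [haj.1], haj.2⟩
          have h2 : |∏ i ∈ s, c i| ≤ 1 := abs_le.2 ⟨by linarith, hPc1⟩
          exact add_le_add
            (mul_le_mul h1 (ih ha' hc') (abs_nonneg _) zero_le_one)
            (mul_le_mul_of_nonneg_left h2 (abs_nonneg _))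
      _ = |a j - c j| + ∑ i ∈ s, |a i - c i| := by ring

lemma aux_bin_mem {n : ℕ} (x : Fin n → ℝ) (hx : IsBin x) :
    x ∈ Set.Icc (0 : Fin n → ℝ) 1 := by
  constructor <;> intro i <;> rcases hx i with h | h <;> simp [h]

lemma aux_pen_eq {n : ℕ} (x z : Fin n → ℝ) (hx : IsBin x)
    (hz : z ∈ Set.Icc (0 : Fin n → ℝ) 1) :
    pen x z = ∑ i, |x i - z i| := by
  have h : pen x z = ∑ i, (x i + z i - 2 * (x i * z i)) := by
    unfold pen
    rw [Finset.sum_sub_distrib, Finset.sum_add_distrib, Finset.mul_sum]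
  rw [h]
  apply Finset.sum_congr rfl
  intro i _
  have hz0 : 0 ≤ z i := hz.1 i
  have hz1 : z i ≤ 1 := hz.2 i
  rcases hx i with hxe | hxe <;> rw [hxe]
  · rw [abs_sub_comm]
    simp [abs_of_nonneg hz0]
  · rw [abs_of_nonneg (by linarith : (0:ℝ) ≤ 1 - z i)]
    ring

lemma aux_pen_nonneg {n : ℕ} (x z : Fin n → ℝ) (hx : IsBin x)
    (hz : z ∈ Set.Icc (0 : Fin n → ℝ) 1) : 0 ≤ pen x z := by
  rw [aux_pen_eq x z hx hz]
  exact Finset.sum_nonneg fun i _ => abs_nonneg _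

lemma aux_pen_le {n : ℕ} (x z : Fin n → ℝ) (hx : IsBin x)
    (hz : z ∈ Set.Icc (0 : Fin n → ℝ) 1) : pen x z ≤ n := by
  rw [aux_pen_eq x z hx hz]
  calc ∑ i, |x i - z i| ≤ ∑ _i : Fin n, (1:ℝ) := by
        apply Finset.sum_le_sum
        intro i _
        have hz0 : 0 ≤ z i := hz.1 i
        have hz1 : z i ≤ 1 := hz.2 i
        rcases hx i with h | h <;> rw [h] <;> rw [abs_le] <;> constructor <;> linarith
    _ = n := by simp

lemma aux_pen_self {n : ℕ} (x : Fin n → ℝ) (hx : IsBin x) : pen x x = 0 := by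
  unfold pen
  have h : ∑ i, x i * x i = ∑ i, x i :=
    Finset.sum_congr rfl fun i _ => by rcases hx i with h | h <;> rw [h] <;> ring
  rw [h]; ring

lemma aux_psi_bin {n : ℕ} (φ : (Fin n → ℝ) → ℝ) (x : Fin n → ℝ) (hx : IsBin x) :
    psi φ x = φ x := by
  classical
  unfold psi
  rw [Fintype.sum_eq_single (fun i => decide (x i = 1))]
  · have h1 : (fun i => if decide (x i = 1) then (1:ℝ) else 0) = x := by
      funext i
      rcases hx i with h | h <;> simp [h]
    have h2 : ∏ i, (if decide (x i = 1) then x i else 1 - x i) = 1 := by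
      apply Finset.prod_eq_one
      intro i _
      rcases hx i with h | h <;> simp [h]
    rw [h1, h2, mul_one]
  · intro v hv
    have : ∃ i, v i ≠ decide (x i = 1) := by
      by_contra hcon
      push_neg at hcon
      exact hv (funext hcon)
    obtain ⟨i, hi⟩ := this
    have : (if v i then x i else 1 - x i) = 0 := by
      rcases hx i with h | h <;> simp [h] at hi ⊢ <;> simp [hi, h]
    rw [Finset.prod_eq_zero (Finset.mem_univ i) this, mul_zero]

lemma aux_psi_le {n : ℕ} (φ : (Fin n → ℝ) → ℝ) (x z : Fin n → ℝ) (hx : IsBin x)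
    (hz : z ∈ Set.Icc (0 : Fin n → ℝ) 1) :
    psi φ z ≤ psi φ x +
      (∑ v : Fin n → Bool, |φ (fun i => if v i then (1 : ℝ) else 0)|) * pen x z := by
  have key : psi φ z - psi φ x ≤
      (∑ v : Fin n → Bool, |φ (fun i => if v i then (1 : ℝ) else 0)|) * pen x z := by
    unfold psi
    rw [← Finset.sum_sub_distrib, Finset.sum_mul]
    apply Finset.sum_le_sum
    intro v _
    set fv := φ (fun i => if v i then (1 : ℝ) else 0) with hfv
    calc fv * ∏ i, (if v i then z i else 1 - z i) -
          fv * ∏ i, (if v i then x i else 1 - x i)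
        = fv * (∏ i, (if v i then z i else 1 - z i) -
            ∏ i, (if v i then x i else 1 - x i)) := by ring
      _ ≤ |fv * (∏ i, (if v i then z i else 1 - z i) -
            ∏ i, (if v i then x i else 1 - x i))| := le_abs_self _
      _ = |fv| * |∏ i, (if v i then z i else 1 - z i) -
            ∏ i, (if v i then x i else 1 - x i)| := abs_mul _ _
      _ ≤ |fv| * pen x z := by
          apply mul_le_mul_of_nonneg_left _ (abs_nonneg _)
          rw [aux_pen_eq x z hx hz]
          have lip := aux_prod_lip (Finset.univ : Finset (Fin n))
            (fun i => if v i then z i else 1 - z i)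
            (fun i => if v i then x i else 1 - x i)
            (fun i _ => by
              have h0 : (0:ℝ) ≤ z i := hz.1 i
              have h1 : z i ≤ 1 := hz.2 i
              by_cases h : v i <;> simp [h] <;> constructor <;> linarith)
            (fun i _ => by
              rcases hx i with h | h <;> by_cases hv : v i <;> simp [h, hv])
          refine lip.trans ?_
          apply le_of_eq
          apply Finset.sum_congr rfl
          intro i _
          show |(if v i then z i else 1 - z i) - (if v i then x i else 1 - x i)|
            = |x i - z i|
          by_cases h : v i = true
          · rw [if_pos h, if_pos h, abs_sub_comm]
          · rw [if_neg h, if_neg h,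
              show (1 - z i) - (1 - x i) = x i - z i by ring]
  linarith

/-- strong duality of the penalty dual at every binary `x`. -/
theorem penalty_strong_duality (n : ℕ) (hn : 0 < n)
    (φ : (Fin n → ℝ) → ℝ) (x : Fin n → ℝ) (hx : IsBin x) :
    (∃ ρstar : ℝ, 0 ≤ ρstar ∧ ∀ ρ : ℝ, ρstar ≤ ρ → Lp φ x ρ = φ x) ∧
    φ x = sInf ((fun ρ => Lp φ x ρ) '' Set.Ici (0 : ℝ)) := by
  classical
  set B : ℝ := ∑ v : Fin n → Bool, |φ (fun i => if v i then (1 : ℝ) else 0)| with hBdef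
  have hB : 0 ≤ B := Finset.sum_nonneg fun v _ => abs_nonneg _
  have hxmem := aux_bin_mem x hx
  have hpsix := aux_psi_bin φ x hx
  have hpenself := aux_pen_self x hx
  -- the value φ x is attained at z = x, for every ρ
  have hmem : ∀ ρ : ℝ, φ x ∈ (fun z => psi φ z - ρ * pen x z) '' Set.Icc (0 : Fin n → ℝ) 1 := by
    intro ρ
    exact ⟨x, hxmem, by show psi φ x - ρ * pen x x = φ x; rw [hpsix, hpenself]; ring⟩
  -- for ρ ≥ 0, the set is bounded above by φ x + B * n
  have hbdd : ∀ ρ : ℝ, 0 ≤ ρ →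
      BddAbove ((fun z => psi φ z - ρ * pen x z) '' Set.Icc (0 : Fin n → ℝ) 1) := by
    intro ρ hρ
    refine ⟨φ x + B * n, ?_⟩
    rintro y ⟨z, hzmem, rfl⟩
    have h1 := aux_psi_le φ x z hx hzmem
    have h2 := aux_pen_nonneg x z hx hzmem
    have h3 := aux_pen_le x z hx hzmem
    have h4 : ρ * pen x z ≥ 0 := mul_nonneg hρ h2
    have h5 : B * pen x z ≤ B * n := mul_le_mul_of_nonneg_left h3 hB
    simp only
    rw [hpsix] at h1
    linarith
  -- for ρ ≥ 0, φ x ≤ Lp φ x ρ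
  have hLp_ge : ∀ ρ : ℝ, 0 ≤ ρ → φ x ≤ Lp φ x ρ := by
    intro ρ hρ
    exact le_csSup (hbdd ρ hρ) (hmem ρ)
  -- for ρ ≥ B, Lp φ x ρ = φ x
  have hLp_eq : ∀ ρ : ℝ, B ≤ ρ → Lp φ x ρ = φ x := by
    intro ρ hρ
    apply le_antisymm
    · apply csSup_le ⟨φ x, hmem ρ⟩
      rintro y ⟨z, hzmem, rfl⟩
      have h1 := aux_psi_le φ x z hx hzmem
      have h2 := aux_pen_nonneg x z hx hzmem
      have h5 : B * pen x z ≤ ρ * pen x z := mul_le_mul_of_nonneg_right hρ h2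
      simp only
      rw [hpsix] at h1
      linarith
    · exact hLp_ge ρ (hB.trans hρ)
  constructor
  · exact ⟨B, hB, hLp_eq⟩
  · apply le_antisymm
    · refine le_csInf ⟨Lp φ x B, B, hB, rfl⟩ ?_
      rintro y ⟨ρ, hρ, rfl⟩
      exact hLp_ge ρ hρ
    · have hlb : φ x ∈ lowerBounds ((fun ρ => Lp φ x ρ) '' Set.Ici (0 : ℝ)) := by
        rintro y ⟨ρ, hρ, rfl⟩
        exact hLp_ge ρ hρ
      exact csInf_le ⟨φ x, hlb⟩ ⟨B, hB, hLp_eq B le_rfl⟩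
end
end

section
/- There exists a single constant ρ̂ ≥ 0 such that for every ρ ≥ ρ̂ and every binary vector x ∈ {0,1}^n one has L_p(x,ρ) = φ(x). -/
open Finset

noncomputable section

/-- Bernstein partition of unity. -/
lemma sum_prod_one {n : ℕ} (z : Fin n → ℝ) :
    ∑ v : Fin n → Bool, ∏ i, (if v i then z i else 1 - z i) = 1 := by
  classical
  have h := Finset.prod_univ_sum (fun _ : Fin n => (Finset.univ : Finset Bool))
      (fun i b => if b then z i else 1 - z i)
  rw [Fintype.piFinset_univ] at h
  rw [← h]
  have hone : ∀ i : Fin n, (∑ b : Bool, (if b then z i else 1 - z i)) = 1 := by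
    intro i; simp
  simp [hone]

/-- a single `ρ̂` works uniformly over all binary `x`. -/
theorem penalty_uniform_coefficient (n : ℕ) (hn : 0 < n)
    (φ : (Fin n → ℝ) → ℝ) :
    ∃ ρhat : ℝ, 0 ≤ ρhat ∧
      ∀ ρ : ℝ, ρhat ≤ ρ → ∀ x : Fin n → ℝ, IsBin x → Lp φ x ρ = φ x := by
  classical
  set bf : (Fin n → Bool) → (Fin n → ℝ) := fun v i => if v i then (1 : ℝ) else 0 with hbf
  set M : ℝ := ∑ v : Fin n → Bool, |φ (bf v)| with hM
  have hM0 : 0 ≤ M := Finset.sum_nonneg fun v _ => abs_nonneg _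
  refine ⟨((2 : ℝ) ^ n + 1) * M, by positivity, ?_⟩
  intro ρ hρ x hx
  set bx : Fin n → Bool := fun i => decide (x i = 1) with hbx
  have hxbf : bf bx = x := by
    funext i
    rcases hx i with h | h <;> simp [hbx, hbf, h]
  have hxM : |φ x| ≤ M := by
    rw [← hxbf]
    exact Finset.single_le_sum (f := fun v => |φ (bf v)|) (fun v _ => abs_nonneg _)
      (mem_univ bx)
  have hxIcc : x ∈ Set.Icc (0 : Fin n → ℝ) 1 := by
    constructor <;> intro i <;> rcases hx i with h | h <;> simp [h]
  have hpenxx : pen x x = 0 := by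
    have hsq : ∀ i, x i * x i = x i := fun i => by rcases hx i with h | h <;> simp [h]
    simp only [pen, hsq]; ring
  have hpsix : psi φ x = φ x := by
    unfold psi
    rw [Finset.sum_eq_single bx]
    · rw [show (fun i => if bx i then (1:ℝ) else 0) = x from hxbf]
      have h1 : ∏ i, (if bx i then x i else 1 - x i) = 1 := by
        apply Finset.prod_eq_one
        intro i _
        rcases hx i with h | h <;> simp [hbx, h]
      rw [h1, mul_one]
    · intro v _ hv
      have hj : ∃ j, v j ≠ bx j := by
        by_contra hc; push_neg at hc; exact hv (funext hc)
      obtain ⟨j, hj⟩ := hj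
      have h0 : (if v j then x j else 1 - x j) = 0 := by
        rcases hx j with h | h <;> simp [hbx, h] at hj <;> simp [hj, h]
      rw [Finset.prod_eq_zero (mem_univ j) h0, mul_zero]
    · intro h; exact absurd (mem_univ bx) h
  have hval : psi φ x - ρ * pen x x = φ x := by rw [hpsix, hpenxx]; ring
  have hub : ∀ z ∈ Set.Icc (0 : Fin n → ℝ) 1, psi φ z - ρ * pen x z ≤ φ x := by
    intro z hz
    obtain ⟨hz0, hz1⟩ := hz
    have hz0' : ∀ i, (0:ℝ) ≤ z i := fun i => hz0 i
    have hz1' : ∀ i, z i ≤ 1 := fun i => hz1 i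
    set d : Fin n → ℝ := fun i => x i + z i - 2 * x i * z i with hd
    have hdnn : ∀ i, 0 ≤ d i := by
      intro i
      rcases hx i with h | h
      · simpa [hd, h] using hz0' i
      · have := hz1' i; simp only [hd, h]; linarith
    have hpen : pen x z = ∑ i, d i := by
      simp only [pen, hd, Finset.sum_sub_distrib, Finset.sum_add_distrib, Finset.mul_sum,
        mul_assoc]
    have hpnn : 0 ≤ pen x z := hpen ▸ Finset.sum_nonneg fun i _ => hdnn i
    have hf01 : ∀ (v : Fin n → Bool) (i : Fin n),
        0 ≤ (if v i then z i else 1 - z i) ∧ (if v i then z i else 1 - z i) ≤ 1 := by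
      intro v i
      have h0 := hz0' i; have h1 := hz1' i
      by_cases hb : v i <;> simp [hb] <;> constructor <;> linarith
    have hW : ∀ v : Fin n → Bool, v ≠ bx →
        (∏ i, (if v i then z i else 1 - z i)) ≤ pen x z := by
      intro v hv
      have hj : ∃ j, v j ≠ bx j := by
        by_contra hc; push_neg at hc; exact hv (funext hc)
      obtain ⟨j, hj⟩ := hj
      have hfj : (if v j then z j else 1 - z j) = d j := by
        rcases hx j with h | h <;> simp [hbx, h] at hj <;> simp [hd, hj, h] <;> ring
      calc (∏ i, (if v i then z i else 1 - z i))
          = (if v j then z j else 1 - z j) * ∏ i ∈ univ.erase j, (if v i then z i else 1 - z i) := by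
            exact (Finset.mul_prod_erase _ _ (mem_univ j)).symm
        _ ≤ (if v j then z j else 1 - z j) * 1 := by
            apply mul_le_mul_of_nonneg_left _ (hf01 v j).1
            exact Finset.prod_le_one (fun i _ => (hf01 v i).1) (fun i _ => (hf01 v i).2)
        _ = d j := by rw [mul_one, hfj]
        _ ≤ ∑ i, d i := Finset.single_le_sum (fun i _ => hdnn i) (mem_univ j)
        _ = pen x z := hpen.symm
    have h1 : ∑ v : Fin n → Bool, (φ (bf v) - φ x) * ∏ i, (if v i then z i else 1 - z i)
        = psi φ z - φ x := by
      simp only [sub_mul]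
      rw [Finset.sum_sub_distrib, ← Finset.mul_sum, sum_prod_one, mul_one]
      rfl
    have h2 : ∀ v : Fin n → Bool,
        (φ (bf v) - φ x) * ∏ i, (if v i then z i else 1 - z i)
          ≤ (|φ (bf v)| + M) * pen x z := by
      intro v
      by_cases hv : v = bx
      · subst hv
        rw [hxbf, sub_self, zero_mul]
        exact mul_nonneg (by positivity) hpnn
      · have hWnn : 0 ≤ ∏ i, (if v i then z i else 1 - z i) :=
          Finset.prod_nonneg fun i _ => (hf01 v i).1
        calc (φ (bf v) - φ x) * ∏ i, (if v i then z i else 1 - z i)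
            ≤ |φ (bf v) - φ x| * ∏ i, (if v i then z i else 1 - z i) :=
              mul_le_mul_of_nonneg_right (le_abs_self _) hWnn
          _ ≤ (|φ (bf v)| + M) * ∏ i, (if v i then z i else 1 - z i) := by
              apply mul_le_mul_of_nonneg_right _ hWnn
              calc |φ (bf v) - φ x| ≤ |φ (bf v)| + |φ x| := abs_sub _ _
                _ ≤ |φ (bf v)| + M := by linarith
          _ ≤ (|φ (bf v)| + M) * pen x z := by
              exact mul_le_mul_of_nonneg_left (hW v hv) (by positivity)
    have h3 : ∑ v : Fin n → Bool, (|φ (bf v)| + M) * pen x z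
        = (((2:ℝ)^n + 1) * M) * pen x z := by
      rw [← Finset.sum_mul, Finset.sum_add_distrib, ← hM, Finset.sum_const,
        Finset.card_univ]
      have : (Fintype.card (Fin n → Bool) : ℝ) = (2:ℝ)^n := by
        simp [Fintype.card_fun]
      rw [nsmul_eq_mul, this]
      ring
    have hkey : psi φ z - φ x ≤ (((2:ℝ)^n + 1) * M) * pen x z := by
      rw [← h1, ← h3]
      exact Finset.sum_le_sum fun v _ => h2 v
    have hρpen : (((2:ℝ)^n + 1) * M) * pen x z ≤ ρ * pen x z :=
      mul_le_mul_of_nonneg_right hρ hpnn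
    linarith
  have himg : φ x ∈ (fun z => psi φ z - ρ * pen x z) '' Set.Icc (0 : Fin n → ℝ) 1 :=
    ⟨x, hxIcc, hval⟩
  have hbdd : ∀ y ∈ (fun z => psi φ z - ρ * pen x z) '' Set.Icc (0 : Fin n → ℝ) 1,
      y ≤ φ x := by
    rintro y ⟨z, hz, rfl⟩; exact hub z hz
  rw [Lp]
  exact le_antisymm (csSup_le ⟨φ x, himg⟩ hbdd) (le_csSup ⟨φ x, hbdd⟩ himg)
end
end

section
/- There exists ρ̂ ≥ 0 such that the penalty-based inequality is valid and tight: for every z ∈ [0,1]^n and every binary x ∈ {0,1}^n one has φ(x) ≥ ψ(z) − ρ̂·p(x,z); moreover, for every binary z ∈ {0,1}^n the right-hand side evaluated at x = z equals φ(z) (the inequality is tight at x = z). -/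
open Finset

noncomputable section

namespace Aux

variable {n : ℕ}

def bv (v : Fin n → Bool) : Fin n → ℝ := fun i => if v i then 1 else 0

def W (v : Fin n → Bool) (z : Fin n → ℝ) : ℝ := ∏ i, (if v i then z i else 1 - z i)

lemma psi_eq (φ : (Fin n → ℝ) → ℝ) (z : Fin n → ℝ) :
    psi φ z = ∑ v : Fin n → Bool, φ (bv v) * W v z := rfl

lemma sumW (z : Fin n → ℝ) : ∑ v : Fin n → Bool, W v z = 1 := by
  have h := Finset.prod_univ_sum (fun _ : Fin n => (Finset.univ : Finset Bool))
    (fun i b => if b then z i else 1 - z i)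
  simp only [Fintype.piFinset_univ] at h
  unfold W
  rw [← h]
  apply Finset.prod_eq_one
  intro i _
  simp

lemma W_at_bin (v u : Fin n → Bool) : W v (bv u) = if v = u then 1 else 0 := by
  by_cases h : v = u
  · subst h
    simp only [if_pos rfl, W, bv]
    apply Finset.prod_eq_one
    intro i _
    cases hv : v i <;> simp [hv]
  · simp only [h, if_false, W, bv]
    obtain ⟨j, hj⟩ := Function.ne_iff.mp h
    apply Finset.prod_eq_zero (Finset.mem_univ j)
    cases hv : v j <;> cases hu : u j <;> simp_all

lemma psi_bin (φ : (Fin n → ℝ) → ℝ) (u : Fin n → Bool) : psi φ (bv u) = φ (bv u) := by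
  rw [psi_eq]
  simp [W_at_bin]

lemma bin_eq (x : Fin n → ℝ) (hx : IsBin x) : x = bv (fun i => decide (x i = 1)) := by
  funext i
  rcases hx i with h | h <;> simp [bv, h]

end Aux

/-- the penalty-based inequality is valid and tight. -/
theorem penalty_cut_valid_and_tight (n : ℕ) (hn : 0 < n)
    (φ : (Fin n → ℝ) → ℝ) :
    ∃ ρhat : ℝ, 0 ≤ ρhat ∧
      (∀ z ∈ Set.Icc (0 : Fin n → ℝ) 1, ∀ x : Fin n → ℝ, IsBin x →
        psi φ z - ρhat * pen x z ≤ φ x) ∧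
      (∀ z : Fin n → ℝ, IsBin z → psi φ z - ρhat * pen z z = φ z) := by
  classical
  refine ⟨∑ u : Fin n → Bool, ∑ v : Fin n → Bool, |φ (Aux.bv v) - φ (Aux.bv u)|, ?_, ?_, ?_⟩
  · positivity
  · intro z hz x hx
    set ρ : ℝ := ∑ u : Fin n → Bool, ∑ v : Fin n → Bool, |φ (Aux.bv v) - φ (Aux.bv u)| with hρ
    have hx' := Aux.bin_eq x hx
    set u : Fin n → Bool := fun i => decide (x i = 1) with hu
    have hz0 : ∀ i, (0:ℝ) ≤ z i := fun i => hz.1 i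
    have hz1 : ∀ i, z i ≤ 1 := fun i => hz.2 i
    have hterm : ∀ i, 0 ≤ Aux.bv u i + z i - 2 * (Aux.bv u i * z i) := by
      intro i
      cases hui : u i <;> simp [Aux.bv, hui] <;> [exact hz0 i; linarith [hz1 i]]
    have hpen_eq : pen (Aux.bv u) z
        = ∑ i, (Aux.bv u i + z i - 2 * (Aux.bv u i * z i)) := by
      simp [pen, Finset.sum_add_distrib, Finset.sum_sub_distrib, Finset.mul_sum]
    have hpen0 : 0 ≤ pen (Aux.bv u) z := by
      rw [hpen_eq]; exact Finset.sum_nonneg fun i _ => hterm i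
    have hW0 : ∀ v : Fin n → Bool, 0 ≤ Aux.W v z := by
      intro v
      apply Finset.prod_nonneg
      intro i _
      cases hv : v i <;> simp [hv] <;> [linarith [hz1 i]; exact hz0 i]
    have hWle : ∀ v : Fin n → Bool, v ≠ u → Aux.W v z ≤ pen (Aux.bv u) z := by
      intro v hv
      obtain ⟨j, hj⟩ := Function.ne_iff.mp hv
      have hfac : (if v j then z j else 1 - z j) ≤ pen (Aux.bv u) z := by
        rw [hpen_eq]
        refine le_trans ?_ (Finset.single_le_sum
          (f := fun i => Aux.bv u i + z i - 2 * (Aux.bv u i * z i))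
          (fun i _ => hterm i) (Finset.mem_univ j))
        cases hvj : v j <;> cases huj : u j <;>
          first
            | exact absurd (hvj.trans huj.symm) hj
            | (simp [Aux.bv, huj]; try linarith)
      refine le_trans ?_ hfac
      unfold Aux.W
      rw [← Finset.prod_erase_mul _ _ (Finset.mem_univ j)]
      have h1 : ∏ i ∈ Finset.univ.erase j, (if v i then z i else 1 - z i) ≤ 1 := by
        apply Finset.prod_le_one
        · intro i _
          cases hv : v i <;> simp [hv] <;> [linarith [hz1 i]; exact hz0 i]
        · intro i _
          cases hv : v i <;> simp [hv] <;> [exact hz0 i; exact hz1 i]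
      have h2 : (0:ℝ) ≤ (if v j then z j else 1 - z j) := by
        cases hv : v j <;> simp [hv] <;> [linarith [hz1 j]; exact hz0 j]
      exact mul_le_of_le_one_left h2 h1
    have key : psi φ z - φ (Aux.bv u)
        = ∑ v : Fin n → Bool, (φ (Aux.bv v) - φ (Aux.bv u)) * Aux.W v z := by
      rw [Aux.psi_eq]
      simp only [sub_mul]
      rw [Finset.sum_sub_distrib, ← Finset.mul_sum, Aux.sumW, mul_one]
    have bound : ∑ v : Fin n → Bool, (φ (Aux.bv v) - φ (Aux.bv u)) * Aux.W v z
        ≤ ρ * pen (Aux.bv u) z := by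
      have h1 : ∀ v : Fin n → Bool,
          (φ (Aux.bv v) - φ (Aux.bv u)) * Aux.W v z
            ≤ |φ (Aux.bv v) - φ (Aux.bv u)| * pen (Aux.bv u) z := by
        intro v
        by_cases hv : v = u
        · subst hv; simp [hpen0]
        · calc (φ (Aux.bv v) - φ (Aux.bv u)) * Aux.W v z
              ≤ |φ (Aux.bv v) - φ (Aux.bv u)| * Aux.W v z :=
                mul_le_mul_of_nonneg_right (le_abs_self _) (hW0 v)
            _ ≤ |φ (Aux.bv v) - φ (Aux.bv u)| * pen (Aux.bv u) z :=
                mul_le_mul_of_nonneg_left (hWle v hv) (abs_nonneg _)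
      calc ∑ v : Fin n → Bool, (φ (Aux.bv v) - φ (Aux.bv u)) * Aux.W v z
          ≤ ∑ v : Fin n → Bool, |φ (Aux.bv v) - φ (Aux.bv u)| * pen (Aux.bv u) z :=
            Finset.sum_le_sum fun v _ => h1 v
        _ = (∑ v : Fin n → Bool, |φ (Aux.bv v) - φ (Aux.bv u)|) * pen (Aux.bv u) z :=
            (Finset.sum_mul _ _ _).symm
        _ ≤ ρ * pen (Aux.bv u) z := by
            refine mul_le_mul_of_nonneg_right ?_ hpen0
            exact Finset.single_le_sum
              (f := fun u' => ∑ v : Fin n → Bool, |φ (Aux.bv v) - φ (Aux.bv u')|)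
              (fun u' _ => Finset.sum_nonneg fun v _ => abs_nonneg _) (Finset.mem_univ u)
    rw [hx']
    linarith [key, bound]
  · intro z hzb
    have hpen : pen z z = 0 := by
      have h : ∀ i, z i * z i = z i := fun i => by rcases hzb i with h | h <;> simp [h]
      simp only [pen, h]
      ring
    rw [hpen, mul_zero, sub_zero, Aux.bin_eq z hzb, Aux.psi_bin]
end
end

section
/- There exist constant vectors U, L ∈ ℝ^n such that for every binary x ∈ {0,1}^n and every λ ∈ ℝ^n satisfying λ_i ≥ U_i whenever x_i = 1 and λ_i ≤ L_i whenever x_i = 0, one has L_ℓ(x,λ) = φ(x). -/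
open Finset

noncomputable section

/-- Lagrangian `L_ℓ(x,λ) = sup_{z ∈ [0,1]^n} [ψ(z) - λᵀ(x - z)]`. -/
def Ll {n : ℕ} (φ : (Fin n → ℝ) → ℝ) (x lam : Fin n → ℝ) : ℝ :=
  sSup ((fun z => psi φ z - ∑ i, lam i * (x i - z i)) '' Set.Icc (0 : Fin n → ℝ) 1)

lemma sum_pi_bool (n : ℕ) (f : Fin n → Bool → ℝ) :
    ∑ v : Fin n → Bool, ∏ i, f i (v i) = ∏ i, (f i true + f i false) := by
  rw [← Fintype.piFinset_univ, ← Finset.prod_univ_sum]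
  simp

lemma sum_w (n : ℕ) (z : Fin n → ℝ) :
    ∑ v : Fin n → Bool, ∏ i, (if v i then z i else 1 - z i) = 1 := by
  rw [sum_pi_bool n (fun i b => if b then z i else 1 - z i)]
  simp

lemma coord_w (n : ℕ) (z : Fin n → ℝ) (i : Fin n) :
    ∑ v : Fin n → Bool, (if v i then (1:ℝ) else 0) * ∏ j, (if v j then z j else 1 - z j)
      = z i := by
  have h1 : ∀ v : Fin n → Bool,
      (if v i then (1:ℝ) else 0) * ∏ j, (if v j then z j else 1 - z j)
      = ∏ j, (fun j b => if j = i then (if b then z j else 0) else (if b then z j else 1 - z j)) j (v j) := by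
    intro v
    rw [← Finset.mul_prod_erase univ _ (mem_univ i),
        ← Finset.mul_prod_erase univ
          (fun j => (fun j b => if j = i then (if b then z j else 0) else (if b then z j else 1 - z j)) j (v j))
          (mem_univ i), ← mul_assoc]
    congr 1
    · cases hv : v i <;> simp
    · apply Finset.prod_congr rfl
      intro j hj
      have : j ≠ i := (Finset.mem_erase.mp hj).1
      simp [this]
  rw [Finset.sum_congr rfl (fun v _ => h1 v),
      sum_pi_bool n (fun j b => if j = i then (if b then z j else 0) else (if b then z j else 1 - z j))]
  have : ∀ j : Fin n, ((if j = i then (if true then z j else 0) else (if true then z j else 1 - z j))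
      + (if j = i then (if false then z j else 0) else (if false then z j else 1 - z j)))
      = if j = i then z j else 1 := by
    intro j; by_cases h : j = i <;> simp [h]
  rw [Finset.prod_congr rfl (fun j _ => this j)]
  simp

lemma F_eq (n : ℕ) (φ : (Fin n → ℝ) → ℝ) (x lam z : Fin n → ℝ) :
    psi φ z - ∑ i, lam i * (x i - z i)
      = ∑ v : Fin n → Bool,
          (φ (fun i => if v i then (1 : ℝ) else 0)
            + ∑ i, lam i * ((if v i then (1:ℝ) else 0) - x i))
          * ∏ i, (if v i then z i else 1 - z i) := by
  have expand : ∀ v : Fin n → Bool,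
      (φ (fun i => if v i then (1 : ℝ) else 0)
        + ∑ i, lam i * ((if v i then (1:ℝ) else 0) - x i))
      * ∏ i, (if v i then z i else 1 - z i)
      = φ (fun i => if v i then (1 : ℝ) else 0) * ∏ i, (if v i then z i else 1 - z i)
        + ∑ i, (lam i * ((if v i then (1:ℝ) else 0) - x i)) * ∏ j, (if v j then z j else 1 - z j) := by
    intro v; rw [add_mul, Finset.sum_mul]
  rw [Finset.sum_congr rfl (fun v _ => expand v), Finset.sum_add_distrib]
  have swap : ∑ v : Fin n → Bool, ∑ i, (lam i * ((if v i then (1:ℝ) else 0) - x i)) * ∏ j, (if v j then z j else 1 - z j)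
      = ∑ i, ∑ v : Fin n → Bool, (lam i * ((if v i then (1:ℝ) else 0) - x i)) * ∏ j, (if v j then z j else 1 - z j) :=
    Finset.sum_comm
  rw [swap]
  have inner : ∀ i, ∑ v : Fin n → Bool, (lam i * ((if v i then (1:ℝ) else 0) - x i)) * ∏ j, (if v j then z j else 1 - z j)
      = - (lam i * (x i - z i)) := by
    intro i
    have : ∀ v : Fin n → Bool,
        (lam i * ((if v i then (1:ℝ) else 0) - x i)) * ∏ j, (if v j then z j else 1 - z j)
        = lam i * ((if v i then (1:ℝ) else 0) * ∏ j, (if v j then z j else 1 - z j))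
          - lam i * x i * ∏ j, (if v j then z j else 1 - z j) := by
      intro v; ring
    rw [Finset.sum_congr rfl (fun v _ => this v), Finset.sum_sub_distrib,
        ← Finset.mul_sum, coord_w, ← Finset.mul_sum, sum_w]
    ring
  rw [Finset.sum_congr rfl (fun i _ => inner i)]
  unfold psi
  rw [Finset.sum_neg_distrib]
  ring

lemma psi_bin (n : ℕ) (φ : (Fin n → ℝ) → ℝ) (x : Fin n → ℝ) (hx : IsBin x) :
    psi φ x = φ x := by
  classical
  set vx : Fin n → Bool := fun i => decide (x i = 1) with hvx
  have hxv : (fun i => if vx i then (1:ℝ) else 0) = x := by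
    funext i
    rcases hx i with h | h <;> simp [hvx, h]
  unfold psi
  rw [Finset.sum_eq_single vx]
  · rw [hxv]
    have : ∏ i, (if vx i then x i else 1 - x i) = 1 := by
      apply Finset.prod_eq_one
      intro i _
      rcases hx i with h | h <;> simp [hvx, h]
    rw [this, mul_one]
  · intro v _ hne
    obtain ⟨i, hi⟩ := Function.ne_iff.mp hne
    have : (if v i then x i else 1 - x i) = 0 := by
      rcases hx i with h | h
      · have hf : vx i = false := by simp [hvx, h]
        rw [hf] at hi
        have : v i = true := by simpa using hi
        simp [this, h]
      · have ht : vx i = true := by simp [hvx, h]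
        rw [ht] at hi
        have : v i = false := by simpa using hi
        simp [this, h]
    rw [Finset.prod_eq_zero (mem_univ i) this, mul_zero]
  · intro h; exact absurd (mem_univ vx) h

/-- uniform multiplier bounds `U, L` valid for all binary `x`. -/
theorem lagrangian_uniform_coefficients (n : ℕ) (hn : 0 < n)
    (φ : (Fin n → ℝ) → ℝ) :
    ∃ U L : Fin n → ℝ, ∀ x : Fin n → ℝ, IsBin x → ∀ lam : Fin n → ℝ,
      (∀ i, (x i = 1 → U i ≤ lam i) ∧ (x i = 0 → lam i ≤ L i)) →
      Ll φ x lam = φ x := by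
  classical
  set M : ℝ := Finset.univ.sup' Finset.univ_nonempty
      (fun v : Fin n → Bool => |φ (fun i => if v i then (1:ℝ) else 0)|) with hM
  have hM0 : 0 ≤ M := by
    rw [hM]
    obtain ⟨v⟩ : Nonempty (Fin n → Bool) := inferInstance
    exact (abs_nonneg _).trans
      (Finset.le_sup' (fun v : Fin n → Bool => |φ (fun i => if v i then (1:ℝ) else 0)|)
        (mem_univ v))
  refine ⟨fun _ => 2 * M, fun _ => -(2 * M), ?_⟩
  intro x hx lam hlam
  set vx : Fin n → Bool := fun i => decide (x i = 1) with hvx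
  have hxv : (fun i => if vx i then (1:ℝ) else 0) = x := by
    funext i
    rcases hx i with h | h <;> simp [hvx, h]
  -- key pointwise bound at vertices
  have hkey : ∀ v : Fin n → Bool,
      φ (fun i => if v i then (1 : ℝ) else 0)
        + ∑ i, lam i * ((if v i then (1:ℝ) else 0) - x i) ≤ φ x := by
    intro v
    by_cases hveq : v = vx
    · subst hveq
      have hz0 : ∀ i ∈ univ, lam i * ((if vx i then (1:ℝ) else 0) - x i) = 0 := by
        intro i _
        have hcf : (if vx i then (1:ℝ) else 0) = x i := congrFun hxv i
        rw [hcf]; ring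
      rw [Finset.sum_eq_zero hz0, add_zero, hxv]
    · obtain ⟨i0, hi0⟩ := Function.ne_iff.mp hveq
      have hterm : ∀ i, lam i * ((if v i then (1:ℝ) else 0) - x i)
          ≤ if i = i0 then -(2 * M) else 0 := by
        intro i
        have hcase : lam i * ((if v i then (1:ℝ) else 0) - x i) ≤ 0 ∧
            (v i ≠ vx i → lam i * ((if v i then (1:ℝ) else 0) - x i) ≤ -(2 * M)) := by
          rcases hx i with h | h
          · have hL : lam i ≤ -(2 * M) := (hlam i).2 h
            have hf : vx i = false := by simp [hvx, h]
            cases hvi : v i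
            · constructor
              · simp [h]
              · intro hne; exact absurd hf.symm hne
            · have heq : lam i * ((if true = true then (1:ℝ) else 0) - x i) = lam i := by
                rw [h]; norm_num
              constructor
              · rw [heq]; linarith
              · intro _; rw [heq]; exact hL
          · have hU : 2 * M ≤ lam i := (hlam i).1 h
            have ht : vx i = true := by simp [hvx, h]
            cases hvi : v i
            · have heq : lam i * ((if false = true then (1:ℝ) else 0) - x i) = -lam i := by
                rw [h]; norm_num
              constructor
              · rw [heq]; linarith
              · intro _; rw [heq]; linarith
            · constructor
              · simp [h]
              · intro hne; exact absurd ht.symm hne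
        by_cases hii : i = i0
        · subst hii
          simpa using hcase.2 hi0
        · simpa [hii] using hcase.1
      have hsum : ∑ i, lam i * ((if v i then (1:ℝ) else 0) - x i) ≤ -(2 * M) := by
        calc ∑ i, lam i * ((if v i then (1:ℝ) else 0) - x i)
            ≤ ∑ i, (if i = i0 then -(2 * M) else 0) :=
              Finset.sum_le_sum (fun i _ => hterm i)
          _ = -(2 * M) := by simp
      have hφv : φ (fun i => if v i then (1 : ℝ) else 0) ≤ M := by
        rw [hM]
        exact (le_abs_self _).trans
          (Finset.le_sup' (fun v : Fin n → Bool => |φ (fun i => if v i then (1:ℝ) else 0)|)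
            (mem_univ v))
      have hφx : -M ≤ φ x := by
        have : |φ x| ≤ M := by
          rw [hM, ← hxv]
          exact Finset.le_sup' (fun v : Fin n → Bool => |φ (fun i => if v i then (1:ℝ) else 0)|)
            (mem_univ vx)
        linarith [neg_abs_le (φ x)]
      linarith
  -- the set and its properties
  set S : Set ℝ := (fun z => psi φ z - ∑ i, lam i * (x i - z i)) '' Set.Icc (0 : Fin n → ℝ) 1
    with hS
  have hxmem : x ∈ Set.Icc (0 : Fin n → ℝ) 1 := by
    constructor <;> intro i <;>
      rcases hx i with h | h <;>
        simp only [Pi.zero_apply, Pi.one_apply, h] <;> norm_num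
  have hub : ∀ y ∈ S, y ≤ φ x := by
    rintro y ⟨z, hz, rfl⟩
    show psi φ z - ∑ i, lam i * (x i - z i) ≤ φ x
    rw [F_eq]
    have hwnn : ∀ v : Fin n → Bool, 0 ≤ ∏ i, (if v i then z i else 1 - z i) := by
      intro v
      apply Finset.prod_nonneg
      intro i _
      cases hvi : v i
      · have h2 := hz.2 i
        simp only [Pi.one_apply] at h2
        norm_num
        linarith
      · have h1 := hz.1 i
        simp only [Pi.zero_apply] at h1
        norm_num
        linarith
    calc ∑ v : Fin n → Bool,
          (φ (fun i => if v i then (1 : ℝ) else 0)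
            + ∑ i, lam i * ((if v i then (1:ℝ) else 0) - x i))
          * ∏ i, (if v i then z i else 1 - z i)
        ≤ ∑ v : Fin n → Bool, φ x * ∏ i, (if v i then z i else 1 - z i) :=
          Finset.sum_le_sum (fun v _ => mul_le_mul_of_nonneg_right (hkey v) (hwnn v))
      _ = φ x := by rw [← Finset.mul_sum, sum_w, mul_one]
  have hmem : φ x ∈ S := by
    refine ⟨x, hxmem, ?_⟩
    show psi φ x - ∑ i, lam i * (x i - x i) = φ x
    have h0 : ∀ i ∈ univ, lam i * (x i - x i) = 0 := by intro i _; ring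
    rw [Finset.sum_eq_zero h0, sub_zero]
    exact psi_bin n φ x hx
  have hne : S.Nonempty := ⟨φ x, hmem⟩
  have hbdd : BddAbove S := ⟨φ x, hub⟩
  exact le_antisymm (csSup_le hne hub) (le_csSup hbdd hmem)
end
end

section
/- For each index i define L_i = min{ φ(z) − φ(z + e_i) : z ∈ {0,1}^n, z_i = 0 } and U_i = max{ φ(z) − φ(z + e_i) : z ∈ {0,1}^n, z_i = 0 }. Then the Lagrangian-based inequality with these coefficients is valid: for all x, z ∈ {0,1}^n, φ(x) ≥ φ(z) − Σ_i (U_i(1 − z_i) + L_i z_i)(x_i − z_i). -/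
open Finset

noncomputable section

/-- The `i`-th standard unit vector of `ℝ^n`. -/
def eVec {n : ℕ} (i : Fin n) : Fin n → ℝ := fun j => if j = i then 1 else 0

lemma binFinite (n : ℕ) : {z : Fin n → ℝ | IsBin z}.Finite := by
  have h : {z : Fin n → ℝ | IsBin z} ⊆ Set.pi Set.univ (fun _ => ({0, 1} : Set ℝ)) := by
    intro z hz j _
    rcases hz j with h | h <;> simp [h]
  exact (Set.Finite.pi fun _ => Set.toFinite _).subset h

lemma setFinite (n : ℕ) (φ : (Fin n → ℝ) → ℝ) (i : Fin n) :
    {r : ℝ | ∃ z : Fin n → ℝ, IsBin z ∧ z i = 0 ∧ r = φ z - φ (z + eVec i)}.Finite := by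
  have h : {r : ℝ | ∃ z : Fin n → ℝ, IsBin z ∧ z i = 0 ∧ r = φ z - φ (z + eVec i)} ⊆
      (fun z => φ z - φ (z + eVec i)) '' {z : Fin n → ℝ | IsBin z} := by
    rintro r ⟨z, hz, -, rfl⟩
    exact ⟨z, hz, rfl⟩
  exact ((binFinite n).image _).subset h

/-- with exact coefficients `L_i` (min) and `U_i` (max) of the
marginal differences, the Lagrangian-based inequality is valid. -/
theorem lagrangian_cut_exact_coefficients (n : ℕ) (hn : 0 < n)
    (φ : (Fin n → ℝ) → ℝ) (U L : Fin n → ℝ)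
    (hL : ∀ i, L i = sInf {r : ℝ | ∃ z : Fin n → ℝ, IsBin z ∧ z i = 0 ∧
      r = φ z - φ (z + eVec i)})
    (hU : ∀ i, U i = sSup {r : ℝ | ∃ z : Fin n → ℝ, IsBin z ∧ z i = 0 ∧
      r = φ z - φ (z + eVec i)}) :
    ∀ x z : Fin n → ℝ, IsBin x → IsBin z →
      φ z - ∑ i, (U i * (1 - z i) + L i * z i) * (x i - z i) ≤ φ x := by
  have hLb : ∀ i (w : Fin n → ℝ), IsBin w → w i = 0 →
      L i ≤ φ w - φ (w + eVec i) := by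
    intro i w hw hwi
    rw [hL i]
    exact csInf_le (setFinite n φ i).bddBelow ⟨w, hw, hwi, rfl⟩
  have hUb : ∀ i (w : Fin n → ℝ), IsBin w → w i = 0 →
      φ w - φ (w + eVec i) ≤ U i := by
    intro i w hw hwi
    rw [hU i]
    exact le_csSup (setFinite n φ i).bddAbove ⟨w, hw, hwi, rfl⟩
  have main : ∀ d : ℕ, ∀ x z : Fin n → ℝ, IsBin x → IsBin z →
      (univ.filter (fun i => x i ≠ z i)).card ≤ d →
      φ z - ∑ i, (U i * (1 - z i) + L i * z i) * (x i - z i) ≤ φ x := by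
    intro d
    induction d with
    | zero =>
      intro x z hx hz hcard
      have hxz : x = z := by
        funext j
        by_contra hj
        have hmem : j ∈ univ.filter (fun i => x i ≠ z i) := by simp [hj]
        have hempty := Finset.card_eq_zero.mp (Nat.le_zero.mp hcard)
        rw [hempty] at hmem
        exact absurd hmem (Finset.notMem_empty j)
      subst hxz
      simp
    | succ d ih =>
      intro x z hx hz hcard
      by_cases hall : ∀ j, x j = z j
      · have hxz : x = z := funext hall
        subst hxz; simp
      · push_neg at hall
        obtain ⟨i, hi⟩ := hall
        have hcard' : ∀ z' : Fin n → ℝ, x i = z' i → (∀ j, j ≠ i → z' j = z j) →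
            (univ.filter (fun j => x j ≠ z' j)).card ≤ d := by
          intro z' hxi' hagree
          have hsub : univ.filter (fun j => x j ≠ z' j) ⊆
              (univ.filter (fun j => x j ≠ z j)).erase i := by
            intro j hj
            simp only [mem_filter, mem_univ, true_and] at hj
            by_cases hji : j = i
            · subst hji; exact absurd hxi' hj
            · rw [mem_erase]
              refine ⟨hji, ?_⟩
              simp only [mem_filter, mem_univ, true_and]
              rw [← hagree j hji]; exact hj
          calc (univ.filter (fun j => x j ≠ z' j)).card
              ≤ ((univ.filter (fun j => x j ≠ z j)).erase i).card := Finset.card_le_card hsub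
            _ = (univ.filter (fun j => x j ≠ z j)).card - 1 :=
                Finset.card_erase_of_mem (by simp [hi])
            _ ≤ d := by omega
        rcases hz i with hzi | hzi
        · -- z i = 0, so x i = 1; flip up
          have hxi : x i = 1 := by
            rcases hx i with h | h
            · exact absurd (h.trans hzi.symm) hi
            · exact h
          set z' : Fin n → ℝ := fun j => if j = i then 1 else z j with hz'def
          have hz' : IsBin z' := by
            intro j; by_cases hj : j = i <;> simp [hz'def, hj, hz j]
          have hze : z' = z + eVec i := by
            funext j
            by_cases hj : j = i <;> simp [hz'def, eVec, hj, hzi]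
          have hstep := ih x z' hx hz' (hcard' z' (by simp [hz'def, hxi])
            (fun j hj => by simp [hz'def, hj]))
          have hbound := hUb i z hz hzi
          rw [← hze] at hbound
          have hsum : ∑ j, (U j * (1 - z j) + L j * z j) * (x j - z j)
              - ∑ j, (U j * (1 - z' j) + L j * z' j) * (x j - z' j) = U i := by
            rw [← Finset.sum_sub_distrib]
            rw [Finset.sum_eq_single i]
            · simp only [hz'def, if_pos rfl, hzi, hxi]; ring
            · intro j _ hj
              simp only [hz'def, if_neg hj]; ring
            · simp
          linarith
        · -- z i = 1, so x i = 0; flip down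
          have hxi : x i = 0 := by
            rcases hx i with h | h
            · exact h
            · exact absurd (h.trans hzi.symm) hi
          set z' : Fin n → ℝ := fun j => if j = i then 0 else z j with hz'def
          have hz' : IsBin z' := by
            intro j; by_cases hj : j = i <;> simp [hz'def, hj, hz j]
          have hz'i : z' i = 0 := by simp [hz'def]
          have hze : z' + eVec i = z := by
            funext j
            by_cases hj : j = i <;> simp [hz'def, eVec, hj, hzi]
          have hstep := ih x z' hx hz' (hcard' z' (by simp [hz'def, hxi])
            (fun j hj => by simp [hz'def, hj]))
          have hbound := hLb i z' hz' hz'i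
          rw [hze] at hbound
          have hsum : ∑ j, (U j * (1 - z j) + L j * z j) * (x j - z j)
              - ∑ j, (U j * (1 - z' j) + L j * z' j) * (x j - z' j) = -(L i) := by
            rw [← Finset.sum_sub_distrib]
            rw [Finset.sum_eq_single i]
            · simp only [hz'def, if_pos rfl, hzi, hxi]; ring
            · intro j _ hj
              simp only [hz'def, if_neg hj]; ring
            · simp
          linarith
  intro x z hx hz
  exact main (univ.filter (fun i => x i ≠ z i)).card x z hx hz le_rfl
end
end

section
/- Let U, L ∈ ℝ^n and set ρ̂ = max_i max{ −L_i, U_i }. Then the Lagrangian-based inequality is at least as strong as the penalty-based inequality: for all x, z ∈ {0,1}^n, Σ_i (U_i(1 − z_i) + L_i z_i)(x_i − z_i) ≤ ρ̂ · (Σ_i x_i + Σ_i z_i − 2 Σ_i x_i z_i); equivalently, for any φ : {0,1}^n → ℝ, the right-hand side φ(z) − Σ_i (U_i(1 − z_i) + L_i z_i)(x_i − z_i) dominates φ(z) − ρ̂·(Σ_i x_i + Σ_i z_i − 2 Σ_i x_i z_i) pointwise on binary vectors. -/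
open Finset

noncomputable section

/-- with `ρ̂ = max_i max{−L_i, U_i}`, the Lagrangian-based
inequality is at least as strong as the penalty-based inequality. -/
theorem lagrangian_stronger_than_penalty (n : ℕ) (hn : 0 < n)
    (U L : Fin n → ℝ) (ρhat : ℝ)
    (hρ : ρhat = Finset.univ.sup' ⟨⟨0, hn⟩, Finset.mem_univ _⟩
      (fun i => max (-L i) (U i))) :
    ∀ x z : Fin n → ℝ, IsBin x → IsBin z →
      ((∑ i, (U i * (1 - z i) + L i * z i) * (x i - z i)) ≤
        ρhat * ((∑ i, x i) + (∑ i, z i) - 2 * ∑ i, x i * z i)) ∧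
      (∀ φ : (Fin n → ℝ) → ℝ,
        φ z - ρhat * ((∑ i, x i) + (∑ i, z i) - 2 * ∑ i, x i * z i) ≤
          φ z - ∑ i, (U i * (1 - z i) + L i * z i) * (x i - z i)) := by
  intro x z hx hz
  have key : (∑ i, (U i * (1 - z i) + L i * z i) * (x i - z i)) ≤
      ρhat * ((∑ i, x i) + (∑ i, z i) - 2 * ∑ i, x i * z i) := by
    have hrw : ρhat * ((∑ i, x i) + (∑ i, z i) - 2 * ∑ i, x i * z i)
        = ∑ i, ρhat * (x i + z i - 2 * (x i * z i)) := by
      simp only [mul_add, mul_sub, Finset.mul_sum, Finset.sum_add_distrib,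
        Finset.sum_sub_distrib]
    rw [hrw]
    apply Finset.sum_le_sum
    intro i _
    have hρi : max (-L i) (U i) ≤ ρhat := by
      rw [hρ]
      exact Finset.le_sup' (fun i => max (-L i) (U i)) (Finset.mem_univ i)
    have hU : U i ≤ ρhat := le_trans (le_max_right _ _) hρi
    have hL : -L i ≤ ρhat := le_trans (le_max_left _ _) hρi
    rcases hx i with h1 | h1 <;> rcases hz i with h2 | h2 <;>
      simp [h1, h2] <;> linarith
  refine ⟨key, fun φ => by linarith⟩
end
end

section
/- Let f be a submodular set function on the subsets of {1,…,n}, let σ be a permutation of {1,…,n}, and set S_0 = ∅ and S_k = {σ(1),…,σ(k)} for 1 ≤ k ≤ n. Then for every subset T ⊆ {1,…,n}: f(T) ≥ f(S_0) + Σ_{k=1}^{n} (f(S_k) − f(S_{k−1})) · 1[σ(k) ∈ T]; moreover this inequality holds with equality whenever T = S_m for some 0 ≤ m ≤ n. -/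
open Finset

noncomputable section

/-- submodularity-based valid inequality (Proposition 3.1 /
Theorem 1 in Shen et al.): for a submodular set function `f`, a permutation
`σ`, and the chain `S_0 = ∅ ⊆ S_1 ⊆ ⋯ ⊆ S_n` of its initial segments,
`f(T) ≥ f(S_0) + Σ_k (f(S_k) − f(S_{k−1}))·1[σ(k) ∈ T]` for all `T`, with
equality whenever `T = S_m` for some `m ≤ n`. -/
theorem submodular_cut (n : ℕ) (hn : 0 < n) (f : Finset (Fin n) → ℝ)
    (hsub : ∀ S T : Finset (Fin n), f (S ∪ T) + f (S ∩ T) ≤ f S + f T)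
    (σ : Equiv.Perm (Fin n)) (S : ℕ → Finset (Fin n))
    (hS : ∀ k : ℕ, S k = Finset.univ.filter (fun i => (σ.symm i : ℕ) < k)) :
    (∀ T : Finset (Fin n),
      f (S 0) + ∑ k : Fin n, (f (S ((k : ℕ) + 1)) - f (S (k : ℕ))) *
        (if σ k ∈ T then (1 : ℝ) else 0) ≤ f T) ∧
    (∀ m : ℕ, m ≤ n →
      f (S m) = f (S 0) + ∑ k : Fin n, (f (S ((k : ℕ) + 1)) - f (S (k : ℕ))) *
        (if σ k ∈ S m then (1 : ℝ) else 0)) := by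
  have hS0 : S 0 = ∅ := by rw [hS]; ext i; simp
  have hSn : S n = Finset.univ := by
    rw [hS]; ext i; simp [(σ.symm i).isLt]
  have hσmem : ∀ (k : Fin n) (m : ℕ), (σ k ∈ S m ↔ (k : ℕ) < m) := by
    intro k m; rw [hS]; simp
  have hins : ∀ j (hj : j < n), S (j + 1) = insert (σ ⟨j, hj⟩) (S j) := by
    intro j hj
    ext i
    rw [hS, hS]
    simp only [Finset.mem_insert, Finset.mem_filter, Finset.mem_univ, true_and]
    constructor
    · intro h
      rcases Nat.lt_succ_iff_lt_or_eq.mp h with h | h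
      · exact Or.inr h
      · left
        have hi : σ.symm i = ⟨j, hj⟩ := Fin.ext h
        have := congrArg σ hi
        simpa using this
    · rintro (h | h)
      · subst h
        simp [Nat.lt_succ_iff]
      · exact Nat.lt_succ_of_lt h
  constructor
  · intro T
    set g : ℕ → ℝ := fun m =>
      (f (S (m + 1)) - f (S m)) * (if ∃ h : m < n, σ ⟨m, h⟩ ∈ T then (1 : ℝ) else 0) with hg
    have hsum : (∑ k : Fin n, (f (S ((k : ℕ) + 1)) - f (S (k : ℕ))) *
        (if σ k ∈ T then (1 : ℝ) else 0)) = ∑ k ∈ Finset.range n, g k := by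
      rw [← Fin.sum_univ_eq_sum_range g]
      refine Finset.sum_congr rfl ?_
      intro k _
      simp [hg, k.isLt]
    rw [hsum]
    have key : ∀ j, j ≤ n → f (S 0) + ∑ k ∈ Finset.range j, g k ≤ f (T ∩ S j) := by
      intro j
      induction j with
      | zero => intro _; simp [hS0]
      | succ j ih =>
        intro hj1
        have hj : j < n := hj1
        have ih' := ih (le_of_lt hj)
        rw [Finset.sum_range_succ]
        have hgj : g j = (f (S (j + 1)) - f (S j)) * (if σ ⟨j, hj⟩ ∈ T then (1 : ℝ) else 0) := by
          simp only [hg]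
          congr 1
          by_cases h : σ ⟨j, hj⟩ ∈ T
          · simp [h, hj]
          · simp [h, hj]
        rw [hgj]
        by_cases h : σ ⟨j, hj⟩ ∈ T
        · have hsm := hsub (T ∩ S (j + 1)) (S j)
          have hu : (T ∩ S (j + 1)) ∪ S j = S (j + 1) := by
            rw [hins j hj]
            ext i
            simp only [Finset.mem_union, Finset.mem_inter, Finset.mem_insert]
            constructor
            · rintro (⟨_, h2⟩ | h2)
              · exact h2
              · exact Or.inr h2
            · rintro (h2 | h2)
              · subst h2; exact Or.inl ⟨h, Or.inl rfl⟩
              · exact Or.inr h2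
          have hi : (T ∩ S (j + 1)) ∩ S j = T ∩ S j := by
            rw [hins j hj]
            ext i
            simp only [Finset.mem_inter, Finset.mem_insert]
            tauto
          rw [hu, hi] at hsm
          simp only [h, if_pos, mul_one]
          linarith
        · have hTS : T ∩ S (j + 1) = T ∩ S j := by
            rw [hins j hj]
            ext i
            simp only [Finset.mem_inter, Finset.mem_insert]
            constructor
            · rintro ⟨h1, h2 | h2⟩
              · subst h2; exact absurd h1 h
              · exact ⟨h1, h2⟩
            · rintro ⟨h1, h2⟩; exact ⟨h1, Or.inr h2⟩
          simp only [h, if_neg, not_false_iff, mul_zero, add_zero]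
          rw [hTS] at *
          exact ih'
    have := key n le_rfl
    rwa [hSn, Finset.inter_univ] at this
  · intro m hm
    have hsum : (∑ k : Fin n, (f (S ((k : ℕ) + 1)) - f (S (k : ℕ))) *
        (if σ k ∈ S m then (1 : ℝ) else 0)) = f (S m) - f (S 0) := by
      have step1 : (∑ k : Fin n, (f (S ((k : ℕ) + 1)) - f (S (k : ℕ))) *
          (if σ k ∈ S m then (1 : ℝ) else 0)) =
          ∑ k ∈ Finset.range n, (f (S (k + 1)) - f (S k)) *
            (if k < m then (1 : ℝ) else 0) := by
        rw [← Fin.sum_univ_eq_sum_range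
          (fun k => (f (S (k + 1)) - f (S k)) * (if k < m then (1 : ℝ) else 0))]
        refine Finset.sum_congr rfl ?_
        intro k _
        simp only [hσmem]
      rw [step1]
      have step2 : (∑ k ∈ Finset.range n, (f (S (k + 1)) - f (S k)) *
          (if k < m then (1 : ℝ) else 0)) =
          ∑ k ∈ Finset.range m, (f (S (k + 1)) - f (S k)) := by
        simp only [mul_ite, mul_one, mul_zero]
        rw [← Finset.sum_filter]
        congr 1
        ext k
        simp only [Finset.mem_filter, Finset.mem_range]
        omega
      rw [step2, Finset.sum_range_sub (fun k => f (S k))]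
    rw [hsum]
    ring
end
end

section
/- Let f be a supermodular set function on the subsets of {1,…,n}, and for A ⊆ {1,…,n} and i ∉ A write δ(A, i) = f(A ∪ {i}) − f(A). Then for every pair of subsets S, T ⊆ {1,…,n}: f(T) ≥ f(S) − Σ_{i ∈ S} δ({1,…,n} \ {i}, i) · 1[i ∉ T] + Σ_{i ∈ {1,…,n} \ S} δ(S, i) · 1[i ∈ T]; moreover the inequality holds with equality when T = S. -/
open Finset

noncomputable section

/-- supermodularity-based valid inequality (Nemhauser–Wolsey):
for a supermodular set function `f`, with `δ(A,i) = f(A ∪ {i}) − f(A)`,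
`f(T) ≥ f(S) − Σ_{i∈S} δ([n]\{i},i)·1[i∉T] + Σ_{i∉S} δ(S,i)·1[i∈T]` for all
`S, T`, with equality at `T = S`. -/
theorem supermodular_cut (n : ℕ) (hn : 0 < n) (f : Finset (Fin n) → ℝ)
    (hsuper : ∀ A B : Finset (Fin n), f A + f B ≤ f (A ∪ B) + f (A ∩ B)) :
    ∀ S T : Finset (Fin n),
      (f S
        - (∑ i ∈ S, (f ((Finset.univ \ {i}) ∪ {i}) - f (Finset.univ \ {i})) *
            (if i ∉ T then (1 : ℝ) else 0))
        + (∑ i ∈ Finset.univ \ S, (f (S ∪ {i}) - f S) *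
            (if i ∈ T then (1 : ℝ) else 0)) ≤ f T) ∧
      (T = S →
        f T = f S
          - (∑ i ∈ S, (f ((Finset.univ \ {i}) ∪ {i}) - f (Finset.univ \ {i})) *
              (if i ∉ T then (1 : ℝ) else 0))
          + (∑ i ∈ Finset.univ \ S, (f (S ∪ {i}) - f S) *
              (if i ∈ T then (1 : ℝ) else 0))) := by
  have hinc : ∀ A B : Finset (Fin n), ∀ i : Fin n, A ⊆ B → i ∉ B →
      f (A ∪ {i}) - f A ≤ f (B ∪ {i}) - f B := by
    intro A B i hAB hiB
    have h := hsuper (A ∪ {i}) B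
    have h1 : (A ∪ {i}) ∪ B = B ∪ {i} := by
      rw [union_comm A, union_assoc, union_eq_right.mpr hAB, union_comm]
    have h2 : (A ∪ {i}) ∩ B = A := by
      rw [union_inter_distrib_right, inter_eq_left.mpr hAB,
        singleton_inter_of_notMem hiB, union_empty]
    rw [h1, h2] at h
    linarith
  intro S T
  have lem1 : ∀ U : Finset (Fin n), Disjoint U S →
      f S + ∑ i ∈ U, (f (S ∪ {i}) - f S) ≤ f (S ∪ U) := by
    intro U
    induction U using Finset.induction_on with
    | empty => simp
    | @insert a U ha ih =>
      intro hdisj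
      have haS : a ∉ S := fun h => (disjoint_left.mp hdisj (mem_insert_self a U)) h
      have hU : Disjoint U S := Disjoint.mono_left (subset_insert a U) hdisj
      have key := hinc S (S ∪ U) a subset_union_left (by simp [haS, ha])
      have hins : S ∪ insert a U = (S ∪ U) ∪ {a} := by
        ext x; simp [mem_insert, mem_union]
      rw [sum_insert ha, hins]
      have := ih hU
      linarith
  have lem2 : ∀ U : Finset (Fin n), Disjoint U T →
      f (T ∪ U) ≤ f T + ∑ i ∈ U, (f univ - f (univ \ {i})) := by
    intro U
    induction U using Finset.induction_on with
    | empty => simp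
    | @insert a U ha ih =>
      intro hdisj
      have haT : a ∉ T := fun h => (disjoint_left.mp hdisj (mem_insert_self a U)) h
      have hU : Disjoint U T := Disjoint.mono_left (subset_insert a U) hdisj
      have key := hinc (T ∪ U) (univ \ {a}) a
        (by intro x hx; simp only [mem_sdiff, mem_univ, mem_singleton, true_and]
            rintro rfl; simp [haT, ha] at hx)
        (by simp)
      have huniv : (univ \ {a}) ∪ {a} = (univ : Finset (Fin n)) := by
        simp [sdiff_union_self_eq_union]
      rw [huniv] at key
      have hins : T ∪ insert a U = (T ∪ U) ∪ {a} := by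
        ext x; simp [mem_insert, mem_union]
      rw [sum_insert ha, hins]
      have := ih hU
      linarith
  have hsum1 : (∑ i ∈ S, (f ((Finset.univ \ {i}) ∪ {i}) - f (Finset.univ \ {i})) *
      (if i ∉ T then (1 : ℝ) else 0)) = ∑ i ∈ S \ T, (f univ - f (univ \ {i})) := by
    simp only [mul_ite, mul_one, mul_zero]
    rw [show (S \ T) = S.filter (· ∉ T) from sdiff_eq_filter S T, ← sum_filter]
    apply sum_congr rfl
    intro i _
    have : (univ \ {i}) ∪ {i} = (univ : Finset (Fin n)) := by
      simp [sdiff_union_self_eq_union]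
    rw [this]
  have hsum2 : (∑ i ∈ Finset.univ \ S, (f (S ∪ {i}) - f S) *
      (if i ∈ T then (1 : ℝ) else 0)) = ∑ i ∈ T \ S, (f (S ∪ {i}) - f S) := by
    have hset : (Finset.univ \ S).filter (· ∈ T) = T \ S := by
      ext x; simp [and_comm]
    simp only [mul_ite, mul_one, mul_zero]
    rw [← hset, ← sum_filter]
  constructor
  · have h1 := lem1 (T \ S) sdiff_disjoint
    have h2 := lem2 (S \ T) sdiff_disjoint
    rw [union_sdiff_self_eq_union] at h1
    rw [union_sdiff_self_eq_union, union_comm T S] at h2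
    rw [hsum1, hsum2]
    linarith
  · rintro rfl
    have e1 : (∑ i ∈ T, (f ((Finset.univ \ {i}) ∪ {i}) - f (Finset.univ \ {i})) *
        (if i ∉ T then (1 : ℝ) else 0)) = 0 := by
      apply sum_eq_zero; intro i hi; simp [hi]
    have e2 : (∑ i ∈ Finset.univ \ T, (f (T ∪ {i}) - f T) *
        (if i ∈ T then (1 : ℝ) else 0)) = 0 := by
      apply sum_eq_zero; intro i hi
      simp only [mem_sdiff] at hi
      simp [hi.2]
    rw [e1, e2]; ring
end
end

section
/- Let Y₁ be a finite nonempty set, g : Y₁ → ℝ, φ₂ : {0,1}^n × Y₁ → ℝ, and define φ(x) = max_{y ∈ Y₁} [ g(y) + φ₂(x, y) ]. Fix z ∈ {0,1}^n and let ŷ ∈ Y₁ attain this maximum at x = z. For each index i define U_i = max{ φ₂(w, ŷ) − φ₂(w + e_i, ŷ) : w ∈ {0,1}^n, w_i = 0 } and L_i = min{ φ₂(w, ŷ) − φ₂(w + e_i, ŷ) : w ∈ {0,1}^n, w_i = 0 }. Then the inequality φ(x) ≥ φ(z) − Σ_i (U_i(1 − z_i) + L_i z_i)(x_i − z_i) holds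 for every x ∈ {0,1}^n, and its right-hand side evaluated at x = z equals φ(z) (the inequality is valid and tight). -/
open Finset

noncomputable section

lemma isBin_finite {n : ℕ} : {w : Fin n → ℝ | IsBin w}.Finite := by
  have : {w : Fin n → ℝ | IsBin w} ⊆ Set.pi Set.univ (fun _ => ({0, 1} : Set ℝ)) := by
    intro w hw j _
    rcases hw j with h | h <;> simp [h]
  exact Set.Finite.subset (Set.Finite.pi (fun _ => (Set.finite_singleton (1:ℝ)).insert 0)) this

/-- quasi-Lagrangian valid and tight inequality. With
`φ(x) = max_y [g(y) + φ₂(x,y)]`, a maximizer `ŷ` at `x = z`, and exact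
coefficients `U_i`/`L_i` from the marginal differences of `φ₂(·,ŷ)`, the
inequality `φ(x) ≥ φ(z) − Σ_i (U_i(1−z_i)+L_i z_i)(x_i−z_i)` is valid for all
binary `x` and tight at `x = z`. -/
theorem quasi_lagrangian_cut (n : ℕ) (hn : 0 < n)
    (Y : Type*) [Fintype Y] [Nonempty Y]
    (g : Y → ℝ) (φ₂ : (Fin n → ℝ) → Y → ℝ) (φ : (Fin n → ℝ) → ℝ)
    (hφ : ∀ x : Fin n → ℝ, φ x = ⨆ y : Y, (g y + φ₂ x y))
    (z : Fin n → ℝ) (hz : IsBin z)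
    (yhat : Y) (hyhat : g yhat + φ₂ z yhat = φ z)
    (U L : Fin n → ℝ)
    (hU : ∀ i, U i = sSup {r : ℝ | ∃ w : Fin n → ℝ, IsBin w ∧ w i = 0 ∧
      r = φ₂ w yhat - φ₂ (w + eVec i) yhat})
    (hL : ∀ i, L i = sInf {r : ℝ | ∃ w : Fin n → ℝ, IsBin w ∧ w i = 0 ∧
      r = φ₂ w yhat - φ₂ (w + eVec i) yhat}) :
    (∀ x : Fin n → ℝ, IsBin x →
      φ z - ∑ i, (U i * (1 - z i) + L i * z i) * (x i - z i) ≤ φ x) ∧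
    φ z - ∑ i, (U i * (1 - z i) + L i * z i) * (z i - z i) = φ z := by
  set c : Fin n → ℝ := fun i => U i * (1 - z i) + L i * z i with hc
  -- finiteness of the difference sets
  have hSfin : ∀ i : Fin n, ({r : ℝ | ∃ w : Fin n → ℝ, IsBin w ∧ w i = 0 ∧
      r = φ₂ w yhat - φ₂ (w + eVec i) yhat}).Finite := by
    intro i
    have : {r : ℝ | ∃ w : Fin n → ℝ, IsBin w ∧ w i = 0 ∧
        r = φ₂ w yhat - φ₂ (w + eVec i) yhat} ⊆
        (fun w => φ₂ w yhat - φ₂ (w + eVec i) yhat) '' {w | IsBin w} := by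
      rintro r ⟨w, hw, _, rfl⟩
      exact ⟨w, hw, rfl⟩
    exact Set.Finite.subset (Set.Finite.image _ isBin_finite) this
  have hUb : ∀ (i : Fin n) (w : Fin n → ℝ), IsBin w → w i = 0 →
      φ₂ w yhat - φ₂ (w + eVec i) yhat ≤ U i := by
    intro i w hw hwi
    rw [hU i]
    exact le_csSup (Set.Finite.bddAbove (hSfin i)) ⟨w, hw, hwi, rfl⟩
  have hLb : ∀ (i : Fin n) (w : Fin n → ℝ), IsBin w → w i = 0 →
      L i ≤ φ₂ w yhat - φ₂ (w + eVec i) yhat := by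
    intro i w hw hwi
    rw [hL i]
    exact csInf_le (Set.Finite.bddBelow (hSfin i)) ⟨w, hw, hwi, rfl⟩
  -- main inequality on φ₂
  have main : ∀ (k : ℕ) (x : Fin n → ℝ), IsBin x →
      (univ.filter (fun i => x i ≠ z i)).card ≤ k →
      φ₂ z yhat - ∑ i, c i * (x i - z i) ≤ φ₂ x yhat := by
    intro k
    induction k with
    | zero =>
      intro x hx hcard
      have hempty : univ.filter (fun i => x i ≠ z i) = ∅ :=
        Finset.card_eq_zero.mp (Nat.le_zero.mp hcard)
      have hxz : x = z := by
        funext j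
        by_contra h
        have : j ∈ univ.filter (fun i => x i ≠ z i) := by simp [h]
        simp [hempty] at this
      subst hxz
      simp
    | succ k ih =>
      intro x hx hcard
      by_cases hle : (univ.filter (fun i => x i ≠ z i)).card ≤ k
      · exact ih x hx hle
      · have hne : (univ.filter (fun i => x i ≠ z i)).Nonempty := by
          rw [← Finset.card_pos]; omega
        obtain ⟨i, hi⟩ := hne
        have hxzi : x i ≠ z i := by simpa using hi
        set x' : Fin n → ℝ := Function.update x i (z i) with hx'
        have hx'bin : IsBin x' := by
          intro j
          by_cases hji : j = i
          · subst hji; simp [hx', hz j]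
          · simp [hx', Function.update_of_ne hji, hx j]
        have hsub : univ.filter (fun j => x' j ≠ z j) ⊆
            (univ.filter (fun j => x j ≠ z j)).erase i := by
          intro j hj
          simp only [mem_filter, mem_univ, true_and] at hj
          have hji : j ≠ i := by
            intro h; subst h; simp [hx'] at hj
          rw [Finset.mem_erase]
          refine ⟨hji, ?_⟩
          simp only [mem_filter, mem_univ, true_and]
          rwa [hx', Function.update_of_ne hji] at hj
        have hcard' : (univ.filter (fun j => x' j ≠ z j)).card ≤ k := by
          have := Finset.card_le_card hsub
          have h2 := Finset.card_erase_of_mem hi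
          omega
        have ihx' := ih x' hx'bin hcard'
        -- sum splitting
        have split : ∀ v : Fin n → ℝ, ∑ j, c j * (v j - z j) =
            (∑ j ∈ univ.erase i, c j * (v j - z j)) + c i * (v i - z i) :=
          fun v => (Finset.sum_erase_add _ _ (mem_univ i)).symm
        have heq : ∑ j ∈ univ.erase i, c j * (x' j - z j) =
            ∑ j ∈ univ.erase i, c j * (x j - z j) := by
          apply Finset.sum_congr rfl
          intro j hj
          rw [hx', Function.update_of_ne (Finset.ne_of_mem_erase hj)]
        have hsum : ∑ j, c j * (x j - z j) =
            ∑ j, c j * (x' j - z j) + c i * (x i - z i) := by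
          rw [split x, split x', heq, hx']
          simp
        -- case on z i
        rcases hz i with hzi | hzi
        · -- z i = 0, so x i = 1
          have hxi : x i = 1 := (hx i).resolve_left (by rw [hzi] at hxzi; exact hxzi)
          have hx'i : x' i = 0 := by simp [hx', hzi]
          have hxx' : x = x' + eVec i := by
            funext j
            by_cases hji : j = i
            · subst hji; simp [eVec, hx'i, hxi]
            · simp [eVec, hji, hx', Function.update_of_ne hji]
          have hUi := hUb i x' hx'bin hx'i
          rw [← hxx'] at hUi
          have hci : c i = U i := by simp [hc, hzi]
          have : c i * (x i - z i) = U i := by rw [hci, hxi, hzi]; ring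
          rw [hsum]
          linarith
        · -- z i = 1, so x i = 0
          have hxi : x i = 0 := (hx i).resolve_right (by rw [hzi] at hxzi; exact hxzi)
          have hx'eq : x' = x + eVec i := by
            funext j
            by_cases hji : j = i
            · subst hji; simp [eVec, hx', hzi, hxi]
            · simp [eVec, hji, hx', Function.update_of_ne hji]
          have hLi := hLb i x hx hxi
          rw [← hx'eq] at hLi
          have hci : c i = L i := by simp [hc, hzi]
          have : c i * (x i - z i) = -(L i) := by rw [hci, hxi, hzi]; ring
          rw [hsum]
          linarith
  constructor
  · intro x hx
    have h1 : g yhat + φ₂ x yhat ≤ φ x := by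
      rw [hφ x]
      exact le_ciSup (f := fun y => g y + φ₂ x y) (Set.Finite.bddAbove (Set.finite_range _)) yhat
    have h2 := main (univ.filter (fun i => x i ≠ z i)).card x hx le_rfl
    have hφz : φ z = g yhat + φ₂ z yhat := hyhat.symm
    calc φ z - ∑ i, c i * (x i - z i)
        = g yhat + (φ₂ z yhat - ∑ i, c i * (x i - z i)) := by rw [hφz]; ring
      _ ≤ g yhat + φ₂ x yhat := by linarith
      _ ≤ φ x := h1
  · simp
end
end

section
/- Suppose α ∈ ℝ^{n_x}, β ∈ ℝ, and there exist ŷ₁ ∈ {0,1}^{n₁}, ŷ₂ ∈ ℝ^{n₂} and a matrix U ∈ ℝ^{n₂×n_x} such that B₁ŷ₁ + B₂ŷ₂ ≤ h − (A + B₂U)⁺𝟙 componentwise and β ≤ d₁ᵀŷ₁ + d₂ᵀŷ₂ + Σ_{j=1}^{n_x} ((Uᵀd₂ − α)_j)⁻. Then the linear-decision-rule inequality is valid: for every binary x ∈ {0,1}^{n_x}, the pair (ŷ₁, Ux + ŷ₂) is feasible for the lower-level problem at x, i.e. B₁ŷ₁ + B₂(Ux + ŷ₂) ≤ h − Ax,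 and its objective value satisfies d₁ᵀŷ₁ + d₂ᵀ(Ux + ŷ₂) ≥ αᵀx + β; in particular the lower-level value function φ(x) = sup{ d₁ᵀy₁ + d₂ᵀy₂ : y₁ ∈ {0,1}^{n₁}, y₂ ∈ ℝ^{n₂}, B₁y₁ + B₂y₂ ≤ h − Ax } satisfies φ(x) ≥ αᵀx + β. -/
open Finset Matrix

noncomputable section

/-- linear-decision-rule valid inequality. If `(ŷ₁, ŷ₂, U)`
satisfies the robustified feasibility condition and `β` is bounded by the
corresponding objective value, then for every binary `x` the pair
`(ŷ₁, Ux + ŷ₂)` is feasible for the lower-level problem at `x`, its objective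
value dominates `αᵀx + β`, and hence the lower-level value function satisfies
`φ(x) ≥ αᵀx + β`. -/
theorem ldr_cut_valid (m nx n1 n2 : ℕ)
    (hm : 0 < m) (hnx : 0 < nx) (hn1 : 0 < n1) (hn2 : 0 < n2)
    (A : Matrix (Fin m) (Fin nx) ℝ) (B1 : Matrix (Fin m) (Fin n1) ℝ)
    (B2 : Matrix (Fin m) (Fin n2) ℝ) (h : Fin m → ℝ)
    (d1 : Fin n1 → ℝ) (d2 : Fin n2 → ℝ)
    (α : Fin nx → ℝ) (β : ℝ)
    (yhat1 : Fin n1 → ℝ) (hy1 : ∀ i, yhat1 i = 0 ∨ yhat1 i = 1)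
    (yhat2 : Fin n2 → ℝ) (U : Matrix (Fin n2) (Fin nx) ℝ)
    (hfeas : ∀ k : Fin m,
      (B1.mulVec yhat1 + B2.mulVec yhat2) k ≤ h k - ∑ j, max ((A + B2 * U) k j) 0)
    (hβ : β ≤ d1 ⬝ᵥ yhat1 + d2 ⬝ᵥ yhat2 + ∑ j, min ((Uᵀ.mulVec d2 - α) j) 0) :
    ∀ x : Fin nx → ℝ, (∀ i, x i = 0 ∨ x i = 1) →
      (∀ k : Fin m,
        (B1.mulVec yhat1 + B2.mulVec (U.mulVec x + yhat2)) k ≤ (h - A.mulVec x) k) ∧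
      (α ⬝ᵥ x + β ≤ d1 ⬝ᵥ yhat1 + d2 ⬝ᵥ (U.mulVec x + yhat2)) ∧
      (∀ φx : ℝ,
        IsLUB {v : ℝ | ∃ (y1 : Fin n1 → ℝ) (y2 : Fin n2 → ℝ),
          (∀ i, y1 i = 0 ∨ y1 i = 1) ∧
          (∀ k : Fin m, (B1.mulVec y1 + B2.mulVec y2) k ≤ (h - A.mulVec x) k) ∧
          v = d1 ⬝ᵥ y1 + d2 ⬝ᵥ y2} φx →
        α ⬝ᵥ x + β ≤ φx) := by
  intro x hx
  have key : ∀ (r : ℝ) (xi : ℝ), (xi = 0 ∨ xi = 1) → r * xi ≤ max r 0 ∧ min r 0 ≤ r * xi := by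
    rintro r xi (rfl | rfl)
    · simp [le_max_iff, min_le_iff]
    · simp
  have hfeas' : ∀ k : Fin m,
      (B1.mulVec yhat1 + B2.mulVec (U.mulVec x + yhat2)) k ≤ (h - A.mulVec x) k := by
    intro k
    have hAU : ((A + B2 * U).mulVec x) k ≤ ∑ j, max ((A + B2 * U) k j) 0 := by
      simp only [mulVec, dotProduct]
      exact Finset.sum_le_sum fun j _ => (key _ _ (hx j)).1
    have := hfeas k
    have hexp : (B1.mulVec yhat1 + B2.mulVec (U.mulVec x + yhat2)) k
        = (B1.mulVec yhat1 + B2.mulVec yhat2) k + ((A + B2 * U).mulVec x) k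
          - (A.mulVec x) k := by
      simp [Matrix.mulVec_add, Matrix.add_mulVec, Matrix.mulVec_mulVec]
      ring
    simp only [Pi.sub_apply]
    rw [hexp]
    linarith
  have hobj : α ⬝ᵥ x + β ≤ d1 ⬝ᵥ yhat1 + d2 ⬝ᵥ (U.mulVec x + yhat2) := by
    have hsum : ∑ j, min ((Uᵀ.mulVec d2 - α) j) 0 ≤ ∑ j, ((Uᵀ.mulVec d2 - α) j) * x j :=
      Finset.sum_le_sum fun j _ => (key _ _ (hx j)).2
    have hdot : d2 ⬝ᵥ (U.mulVec x) = ∑ j, (Uᵀ.mulVec d2) j * x j := by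
      simp [dotProduct, mulVec, Matrix.transpose_apply, Finset.mul_sum, Finset.sum_mul]
      rw [Finset.sum_comm]
      congr 1; ext j; congr 1; ext i; ring
    have : d2 ⬝ᵥ (U.mulVec x + yhat2) = d2 ⬝ᵥ yhat2 + ∑ j, (Uᵀ.mulVec d2) j * x j := by
      rw [dotProduct_add, hdot]; ring
    rw [this]
    have hαx : α ⬝ᵥ x = ∑ j, α j * x j := rfl
    have hstep : ∑ j, ((Uᵀ.mulVec d2 - α) j) * x j
        = ∑ j, (Uᵀ.mulVec d2) j * x j - ∑ j, α j * x j := by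
      rw [← Finset.sum_sub_distrib]
      congr 1; ext j; simp [Pi.sub_apply]; ring
    rw [hαx]
    linarith [hβ, hsum, hstep ▸ hsum]
  refine ⟨hfeas', hobj, ?_⟩
  intro φx hlub
  have hmem : d1 ⬝ᵥ yhat1 + d2 ⬝ᵥ (U.mulVec x + yhat2) ∈
      {v : ℝ | ∃ (y1 : Fin n1 → ℝ) (y2 : Fin n2 → ℝ),
        (∀ i, y1 i = 0 ∨ y1 i = 1) ∧
        (∀ k : Fin m, (B1.mulVec y1 + B2.mulVec y2) k ≤ (h - A.mulVec x) k) ∧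
        v = d1 ⬝ᵥ y1 + d2 ⬝ᵥ y2} :=
    ⟨yhat1, U.mulVec x + yhat2, hy1, hfeas', rfl⟩
  exact le_trans hobj (hlub.1 hmem)
end
end
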